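/- For all positive integers s and real a' = 1/4, the product ∏_{k=1}^{s} Γ(k/4)/Γ(k/4 + 1/2), when multiplied by s!/2^{s/2}, equals (1/2^{s/2}) · Γ(1/4)Γ(1/2)Γ(s+1) / (Γ((s+1)/4)Γ((s+2)/4)). -/
import Mathlib


open Real Finset

lemma gamma_prod_telescope (s : ℕ) (hs : 1 ≤ s) :
    ∏ k ∈ Finset.Icc 1 s, Real.Gamma ((k : ℝ) / 4) / Real.Gamma ((k : ℝ) / 4 + 1 / 2)
      = Real.Gamma (1 / 4) * Real.Gamma (1 / 2) /
        (Real.Gamma (((s : ℝ) + 1) / 4) * Real.Gamma (((s : ℝ) + 2) / 4)) := by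
  induction s with
  | zero => omega
  | succ n ih =>
    rcases Nat.eq_or_lt_of_le hs with h | h
    · simp only [← h]
      norm_num
      have h34 : Real.Gamma (3/4) ≠ 0 := (Real.Gamma_pos_of_pos (by norm_num)).ne'
      have h12 : Real.Gamma (1/2) ≠ 0 := (Real.Gamma_pos_of_pos (by norm_num)).ne'
      field_simp
    · have hn : 1 ≤ n := by omega
      rw [Finset.prod_Icc_succ_top (by omega), ih hn]
      have hA : Real.Gamma (((n:ℝ) + 1) / 4) ≠ 0 :=
        (Real.Gamma_pos_of_pos (by positivity)).ne'
      have hB : Real.Gamma (((n:ℝ) + 2) / 4) ≠ 0 :=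
        (Real.Gamma_pos_of_pos (by positivity)).ne'
      have hC : Real.Gamma (((n:ℝ) + 3) / 4) ≠ 0 :=
        (Real.Gamma_pos_of_pos (by positivity)).ne'
      push_cast
      rw [show ((n:ℝ)+1)/4 + 1/2 = ((n:ℝ)+3)/4 by ring,
        show ((n:ℝ)+1+1)/4 = ((n:ℝ)+2)/4 by ring,
        show ((n:ℝ)+1+2)/4 = ((n:ℝ)+3)/4 by ring]
      field_simp

theorem stmt_0 (s : ℕ) (hs : 1 ≤ s) :
    ((s.factorial : ℝ) / (2 : ℝ) ^ ((s : ℝ) / 2)) *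
      ∏ k ∈ Finset.Icc 1 s, Real.Gamma ((k : ℝ) / 4) / Real.Gamma ((k : ℝ) / 4 + 1 / 2)
    = (1 / (2 : ℝ) ^ ((s : ℝ) / 2)) *
      (Real.Gamma (1 / 4) * Real.Gamma (1 / 2) * Real.Gamma ((s : ℝ) + 1)) /
        (Real.Gamma (((s : ℝ) + 1) / 4) * Real.Gamma (((s : ℝ) + 2) / 4)) := by
  rw [gamma_prod_telescope s hs]
  have hfac : Real.Gamma ((s : ℝ) + 1) = s.factorial := by
    exact_mod_cast Real.Gamma_nat_eq_factorial s
  rw [hfac]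
  have hA : Real.Gamma (((s:ℝ) + 1) / 4) ≠ 0 :=
    (Real.Gamma_pos_of_pos (by positivity)).ne'
  have hB : Real.Gamma (((s:ℝ) + 2) / 4) ≠ 0 :=
    (Real.Gamma_pos_of_pos (by positivity)).ne'
  have h2 : (2:ℝ) ^ ((s:ℝ)/2) ≠ 0 := by positivity
  field_simp
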